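/- arXiv:0812.2432 — 3 statements merged into one kernel-verified Lean document; each statement's English description precedes it below -/
import Mathlib

section
/- Let B be an n × N real matrix with columns B₁,…,B_N and operator norm ‖B‖ ≤ 1. Let a₁,…,a_N be independent mean-zero random variables with E[aᵢ⁴] ≤ 1. Define the random vector X = Σᵢ aᵢ Bᵢ ∈ ℝⁿ. Then E‖X‖₂² ≤ n and Var(‖X‖₂²) ≤ 3n. -/
/-!
Write `C = Bᵀ B`, so that `‖X‖² = ∑ᵢₖ aᵢ aₖ Cᵢₖ`. Independence and centring leave only the
pairings in `E[aᵢ aₖ aₗ aₘ]`, plus a correction on the diagonal `i = k = l = m`; with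
`σᵢ = E aᵢ²` this gives `E ‖X‖² = ∑ᵢ σᵢ Cᵢᵢ` and
`Var ‖X‖² = 2 ∑ᵢₖ σᵢ σₖ Cᵢₖ² + ∑ᵢ (E aᵢ⁴ - 3 σᵢ²) Cᵢᵢ²`.
Since `‖Bᵀ‖ = ‖B‖ ≤ 1`, the rows of `B` are unit-bounded, so `tr C ≤ n`, and `C² ≤ C`, so
`∑ᵢₖ Cᵢₖ² ≤ tr C`. Finally `σᵢ² ≤ E aᵢ⁴ ≤ 1`.
-/

open MeasureTheory ProbabilityTheory

/-- The ℓ² → ℓ² operator (spectral) norm of a rectangular real matrix. -/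
noncomputable def opNorm {m n : ℕ} (M : Matrix (Fin m) (Fin n) ℝ) : ℝ :=
  ‖LinearMap.toContinuousLinearMap (Matrix.toEuclideanLin M)‖

open Finset Matrix
open scoped Matrix.Norms.L2Operator

namespace Matrix

variable {m n : Type*} [Fintype m] [Fintype n] {A : Matrix m n ℝ}

theorem sum_sq_mulVec_eq (A : Matrix m n ℝ) (x : n → ℝ) :
    ∑ i, (A *ᵥ x) i ^ 2 = ∑ j, ∑ k, x j * x k * (Aᵀ * A) j k := by
  simp only [sq, mulVec, dotProduct, sum_mul_sum]
  simp only [mul_apply, transpose_apply, mul_sum]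
  rw [sum_comm]
  refine sum_congr rfl fun j _ ↦ ?_
  rw [sum_comm]
  exact sum_congr rfl fun k _ ↦ sum_congr rfl fun i _ ↦ by ring

theorem sum_sq_mulVec_le [DecidableEq n] (hA : ‖A‖ ≤ 1) (x : n → ℝ) :
    ∑ i, (A *ᵥ x) i ^ 2 ≤ ∑ j, x j ^ 2 := by
  have h : ‖(EuclideanSpace.equiv m ℝ).symm (A *ᵥ x)‖ ≤ ‖WithLp.toLp 2 x‖ :=
    (A.l2_opNorm_mulVec (WithLp.toLp 2 x)).trans (mul_le_of_le_one_left (norm_nonneg _) hA)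
  simpa [EuclideanSpace.real_norm_sq_eq] using pow_le_pow_left₀ (norm_nonneg _) h 2

variable [DecidableEq m] [DecidableEq n]

theorem l2_opNorm_transpose (A : Matrix m n ℝ) : ‖Aᵀ‖ = ‖A‖ := by
  rw [← conjTranspose_eq_transpose_of_trivial, l2_opNorm_conjTranspose]

theorem trace_transpose_mul_self_le (hA : ‖A‖ ≤ 1) : trace (Aᵀ * A) ≤ Fintype.card m := by
  have hrow (j : m) : ∑ k, A j k ^ 2 ≤ 1 := by
    simpa [mulVec_single_one, Pi.single_apply, ite_pow] using
      sum_sq_mulVec_le ((l2_opNorm_transpose A).trans_le hA) (Pi.single j 1)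
  calc trace (Aᵀ * A) = ∑ j, ∑ k, A j k ^ 2 := by
        simp only [trace, diag, mul_apply, transpose_apply, sq]; exact sum_comm
    _ ≤ ∑ _j : m, (1 : ℝ) := sum_le_sum fun j _ ↦ hrow j
    _ = Fintype.card m := by simp

theorem sum_sq_transpose_mul_self_le_trace (hA : ‖A‖ ≤ 1) :
    ∑ i, ∑ k, (Aᵀ * A) i k ^ 2 ≤ trace (Aᵀ * A) := by
  have hcol (k : n) : ∑ i, (Aᵀ * A) i k ^ 2 ≤ (Aᵀ * A) k k := by
    simpa [mulVec, dotProduct, mul_apply, sq] using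
      sum_sq_mulVec_le ((l2_opNorm_transpose A).trans_le hA) (fun j ↦ A j k)
  rw [sum_comm]
  exact sum_le_sum fun k _ ↦ hcol k

theorem sum_mul_diag_transpose_mul_self_le (hA : ‖A‖ ≤ 1) {w : n → ℝ} (hw : ∀ i, w i ≤ 1) :
    ∑ i, w i * (Aᵀ * A) i i ≤ Fintype.card m := by
  have hdiag (i : n) : 0 ≤ (Aᵀ * A) i i := by
    simpa using (posSemidef_conjTranspose_mul_self A).diag_nonneg (i := i)
  calc ∑ i, w i * (Aᵀ * A) i i ≤ ∑ i, (Aᵀ * A) i i := by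
        gcongr with i; exact mul_le_of_le_one_left (hdiag i) (hw i)
    _ ≤ Fintype.card m := trace_transpose_mul_self_le hA

theorem two_mul_sum_mul_sq_add_sum_mul_sq_diag_le (hA : ‖A‖ ≤ 1) {s t : n → ℝ}
    (hs0 : ∀ i, 0 ≤ s i) (hs1 : ∀ i, s i ≤ 1) (ht : ∀ i, t i ≤ 1) :
    2 * ∑ i, ∑ k, s i * s k * (Aᵀ * A) i k ^ 2 + ∑ i, t i * (Aᵀ * A) i i ^ 2
      ≤ 3 * Fintype.card m := by
  have hHS := sum_sq_transpose_mul_self_le_trace hA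
  have htrace := trace_transpose_mul_self_le hA
  calc _ ≤ 2 * ∑ i, ∑ k, (Aᵀ * A) i k ^ 2 + ∑ i, ∑ k, (Aᵀ * A) i k ^ 2 := by
        gcongr with i _ k
        · exact mul_le_of_le_one_left (sq_nonneg _) (mul_le_one₀ (hs1 i) (hs0 k) (hs1 k))
        · exact (mul_le_of_le_one_left (sq_nonneg _) (ht i)).trans
            (single_le_sum (fun k _ ↦ sq_nonneg ((Aᵀ * A) i k)) (mem_univ i))
    _ ≤ 3 * Fintype.card m := by linarith

end Matrix

instance ENNReal.HolderTriple.instFourFourTwo : ENNReal.HolderTriple 4 4 2 := by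
  rw [ENNReal.holderTriple_iff, ← two_mul, show (4 : ENNReal) = 2 * 2 by norm_num,
    ENNReal.mul_inv (by simp) (by simp), ← mul_assoc, ENNReal.mul_inv_cancel (by simp) (by simp),
    one_mul]

namespace MeasureTheory

variable {Ω : Type*} {mΩ : MeasurableSpace Ω} {μ : Measure Ω}

theorem memLp_of_integrable_pow {f : Ω → ℝ} {p : ℕ} (hp : Even p) (hp0 : p ≠ 0)
    (hf : AEStronglyMeasurable f μ) (hfp : Integrable (fun ω ↦ f ω ^ p) μ) : MemLp f p μ := by
  rw [← integrable_norm_rpow_iff hf (by simpa using hp0) (by simp)]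
  simpa [Real.norm_eq_abs, hp.pow_abs] using hfp

theorem MemLp.integrable_mul_mul_mul {f g h k : Ω → ℝ} (hf : MemLp f 4 μ) (hg : MemLp g 4 μ)
    (hh : MemLp h 4 μ) (hk : MemLp k 4 μ) : Integrable (fun ω ↦ f ω * g ω * h ω * k ω) μ := by
  refine ((hg.mul' hf (r := 2)).integrable_mul (hk.mul' hh (r := 2))).congr
    (.of_forall fun ω ↦ ?_)
  simp only [Pi.mul_apply, mul_assoc]

theorem integral_sum_sum {ι κ : Type*} [Fintype ι] [Fintype κ] {f : ι → κ → Ω → ℝ}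
    (hf : ∀ i k, Integrable (f i k) μ) :
    ∫ ω, ∑ i, ∑ k, f i k ω ∂μ = ∑ i, ∑ k, ∫ ω, f i k ω ∂μ := by
  rw [integral_finsetSum _ fun i _ ↦ integrable_finsetSum _ fun k _ ↦ hf i k]
  exact sum_congr rfl fun i _ ↦ integral_finsetSum _ fun k _ ↦ hf i k

end MeasureTheory

namespace ProbabilityTheory

variable {Ω ι : Type*} {mΩ : MeasurableSpace Ω} {μ : Measure Ω}

theorem moment_two_nonneg (X : Ω → ℝ) (μ : Measure Ω) : 0 ≤ moment X 2 μ :=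
  integral_nonneg fun ω ↦ sq_nonneg (X ω)

theorem sq_moment_two_le_moment_four [IsProbabilityMeasure μ] {X : Ω → ℝ} (hX : MemLp X 4 μ) :
    moment X 2 μ ^ 2 ≤ moment X 4 μ := by
  have hX2 : MemLp (X ^ 2) 2 μ := by simpa only [sq] using hX.mul hX (r := 2)
  have hvar := variance_eq_sub hX2
  have hvar_nonneg := variance_nonneg (X ^ 2) μ
  simp only [moment, ← pow_mul] at *
  linarith

theorem moment_two_le_one [IsProbabilityMeasure μ] {X : Ω → ℝ} (hX : MemLp X 4 μ)
    (h4 : moment X 4 μ ≤ 1) : moment X 2 μ ≤ 1 :=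
  (pow_le_one_iff_of_nonneg (moment_two_nonneg X μ) two_ne_zero).1
    ((sq_moment_two_le_moment_four hX).trans h4)

variable {a : ι → Ω → ℝ}

theorem iIndepFun.integral_mul_eq_ite_moment [DecidableEq ι] (hindep : iIndepFun a μ)
    (hmeas : ∀ i, Measurable (a i)) (hmean : ∀ i, μ[a i] = 0) (i k : ι) :
    ∫ ω, a i ω * a k ω ∂μ = if i = k then moment (a i) 2 μ else 0 := by
  split_ifs with hik
  · simp [hik, moment, sq]
  · rw [(hindep.indepFun hik).integral_fun_mul_eq_mul_integral (hmeas i).aestronglyMeasurable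
      (hmeas k).aestronglyMeasurable, hmean i, zero_mul]

theorem iIndepFun.integral_mul_mul_mul_mul_eq_zero (hindep : iIndepFun a μ)
    (hmeas : ∀ i, Measurable (a i)) (hmean : ∀ i, μ[a i] = 0) {j p q r : ι}
    (hp : j ≠ p) (hq : j ≠ q) (hr : j ≠ r) :
    ∫ ω, a j ω * (a p ω * a q ω * a r ω) ∂μ = 0 := by
  classical
  have hjpqr : IndepFun (a j) (fun ω ↦ a p ω * a q ω * a r ω) μ :=
    (hindep.indepFun_finset {j} {p, q, r} (by simp [hp, hq, hr]) hmeas).comp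
      (φ := fun v : ({j} : Finset ι) → ℝ ↦ v ⟨j, by simp⟩)
      (ψ := fun v : ({p, q, r} : Finset ι) → ℝ ↦ v ⟨p, by simp⟩ * v ⟨q, by simp⟩ * v ⟨r, by simp⟩)
      (by fun_prop) (by fun_prop)
  rw [hjpqr.integral_fun_mul_eq_mul_integral (hmeas j).aestronglyMeasurable (by fun_prop),
    hmean j, zero_mul]

theorem iIndepFun.integral_sq_mul_sq (hindep : iIndepFun a μ) (hmeas : ∀ i, Measurable (a i))
    {i l : ι} (hil : i ≠ l) :
    ∫ ω, a i ω ^ 2 * a l ω ^ 2 ∂μ = moment (a i) 2 μ * moment (a l) 2 μ :=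
  ((hindep.indepFun hil).comp (φ := (· ^ 2)) (ψ := (· ^ 2)) (by fun_prop) (by fun_prop))
    |>.integral_fun_mul_eq_mul_integral (by fun_prop) (by fun_prop)

theorem iIndepFun.integral_mul_mul_mul_mul [DecidableEq ι] (hindep : iIndepFun a μ)
    (hmeas : ∀ i, Measurable (a i)) (hmean : ∀ i, μ[a i] = 0) (i k l m : ι) :
    ∫ ω, a i ω * a k ω * a l ω * a m ω ∂μ =
      (if i = k ∧ l = m then moment (a i) 2 μ * moment (a l) 2 μ else 0)
      + (if i = l ∧ k = m then moment (a i) 2 μ * moment (a k) 2 μ else 0)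
      + (if i = m ∧ k = l then moment (a i) 2 μ * moment (a k) 2 μ else 0)
      + (if i = k ∧ i = l ∧ i = m then moment (a i) 4 μ - 3 * moment (a i) 2 μ ^ 2 else 0) := by
  by_cases hdiag : i = k ∧ i = l ∧ i = m
  · obtain ⟨rfl, rfl, rfl⟩ := hdiag
    calc _ = moment (a i) 4 μ :=
          integral_congr_ae (.of_forall fun ω ↦ by simp only [Pi.pow_apply]; ring)
      _ = _ := by simp only [and_self, if_true]; ring
  by_cases hpair : (i = k ∧ l = m) ∨ (i = l ∧ k = m) ∨ (i = m ∧ k = l)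
  · rcases hpair with ⟨rfl, rfl⟩ | ⟨rfl, rfl⟩ | ⟨rfl, rfl⟩
    · have hil : i ≠ l := by grind
      simp only [and_self, ↓reduceIte, hil, add_zero, and_false]
      exact (integral_congr_ae (.of_forall fun ω ↦ by ring)).trans
        (hindep.integral_sq_mul_sq hmeas hil)
    · have hik : i ≠ k := by grind
      simp only [hik, and_self, ↓reduceIte, zero_add, hik.symm, add_zero, and_false]
      exact (integral_congr_ae (.of_forall fun ω ↦ by ring)).trans
        (hindep.integral_sq_mul_sq hmeas hik)
    · have hik : i ≠ k := by grind
      simp only [hik, hik.symm, and_self, ↓reduceIte, add_zero, zero_add, and_true]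
      exact (integral_congr_ae (.of_forall fun ω ↦ by ring)).trans
        (hindep.integral_sq_mul_sq hmeas hik)
  · rw [if_neg (by tauto), if_neg (by tauto), if_neg (by tauto), if_neg hdiag, add_zero, add_zero,
      add_zero]
    have hisolated : (i ≠ k ∧ i ≠ l ∧ i ≠ m) ∨ (k ≠ i ∧ k ≠ l ∧ k ≠ m) ∨
        (l ≠ i ∧ l ≠ k ∧ l ≠ m) ∨ (m ≠ i ∧ m ≠ k ∧ m ≠ l) := by grind
    rcases hisolated with ⟨hp, hq, hr⟩ | ⟨hp, hq, hr⟩ | ⟨hp, hq, hr⟩ | ⟨hp, hq, hr⟩ <;>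
      exact (integral_congr_ae (.of_forall fun ω ↦ by ring)).trans
        (hindep.integral_mul_mul_mul_mul_eq_zero hmeas hmean hp hq hr)

variable [Fintype ι] [DecidableEq ι]

theorem iIndepFun.integral_quadraticForm (hindep : iIndepFun a μ) (hmeas : ∀ i, Measurable (a i))
    (hmean : ∀ i, μ[a i] = 0) (hL2 : ∀ i, MemLp (a i) 2 μ) (c : ι → ι → ℝ) :
    ∫ ω, ∑ i, ∑ k, a i ω * a k ω * c i k ∂μ = ∑ i, moment (a i) 2 μ * c i i := by
  rw [integral_sum_sum (f := fun i k ω ↦ a i ω * a k ω * c i k)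
    fun i k ↦ ((hL2 i).integrable_mul (hL2 k)).mul_const (c i k)]
  simp [integral_mul_const, hindep.integral_mul_eq_ite_moment hmeas hmean, ite_mul]

theorem iIndepFun.integral_quadraticForm_sq_sub_sq [IsFiniteMeasure μ] (hindep : iIndepFun a μ)
    (hmeas : ∀ i, Measurable (a i)) (hmean : ∀ i, μ[a i] = 0) (hL4 : ∀ i, MemLp (a i) 4 μ)
    {c : ι → ι → ℝ} (hc : ∀ i k, c k i = c i k) :
    ∫ ω, (∑ i, ∑ k, a i ω * a k ω * c i k) ^ 2 ∂μ - (∫ ω, ∑ i, ∑ k, a i ω * a k ω * c i k ∂μ) ^ 2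
      = 2 * ∑ i, ∑ k, moment (a i) 2 μ * moment (a k) 2 μ * c i k ^ 2
        + ∑ i, (moment (a i) 4 μ - 3 * moment (a i) 2 μ ^ 2) * c i i ^ 2 := by
  have hsq (ω : Ω) : (∑ i, ∑ k, a i ω * a k ω * c i k) ^ 2
      = ∑ i, ∑ k, ∑ l, ∑ m, a i ω * a k ω * a l ω * a m ω * (c i k * c l m) := by
    simp only [sq, mul_sum, sum_mul]
    exact sum_congr rfl fun i _ ↦ sum_congr rfl fun k _ ↦ sum_congr rfl fun l _ ↦
      sum_congr rfl fun m _ ↦ by ring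
  have hint (i k l m : ι) :
      Integrable (fun ω ↦ a i ω * a k ω * a l ω * a m ω * (c i k * c l m)) μ :=
    ((hL4 i).integrable_mul_mul_mul (hL4 k) (hL4 l) (hL4 m)).mul_const _
  have hmean_sq : (∑ i, moment (a i) 2 μ * c i i) ^ 2
      = ∑ i, ∑ k, moment (a i) 2 μ * moment (a k) 2 μ * (c i i * c k k) := by
    rw [sq, sum_mul_sum]
    exact sum_congr rfl fun _ _ ↦ sum_congr rfl fun _ _ ↦ by ring
  simp_rw [hsq]
  rw [integral_sum_sum fun i k ↦ integrable_finsetSum _ fun l _ ↦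
    integrable_finsetSum _ fun m _ ↦ hint i k l m]
  simp_rw [integral_sum_sum fun l m ↦ hint _ _ l m, integral_mul_const,
    hindep.integral_mul_mul_mul_mul hmeas hmean,
    hindep.integral_quadraticForm hmeas hmean (fun i ↦ (hL4 i).mono_exponent (by norm_num)) c]
  simp only [ite_and, add_mul, ite_mul, zero_mul, sum_add_distrib, sum_ite_irrel, sum_ite_eq,
    mem_univ, ↓reduceIte, sum_const_zero, hc]
  rw [hmean_sq]
  ring_nf

end ProbabilityTheory

/-- For a matrix `B` with `‖B‖ ≤ 1` and independent mean-zero `aᵢ` with `E aᵢ⁴ ≤ 1`,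
the vector `X = Σᵢ aᵢ Bᵢ` satisfies `E ‖X‖₂² ≤ n` and `Var(‖X‖₂²) ≤ 3n`. -/
theorem exp_var_of_random_combination {Ω : Type*} [MeasureSpace Ω]
    [IsProbabilityMeasure (ℙ : Measure Ω)]
    (n N : ℕ) (B : Matrix (Fin n) (Fin N) ℝ) (hB : opNorm B ≤ 1)
    (a : Fin N → Ω → ℝ)
    (hmeas : ∀ i, Measurable (a i))
    (hindep : iIndepFun a ℙ)
    (hmean : ∀ i, ∫ ω, a i ω = 0)
    (hmom : ∀ i, (∫ ω, (a i ω) ^ 4) ≤ 1)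
    (hint : ∀ i, Integrable (fun ω => (a i ω) ^ 4)) :
    (∫ ω, ∑ j, (∑ i, a i ω * B j i) ^ 2) ≤ n ∧
    (∫ ω, (∑ j, (∑ i, a i ω * B j i) ^ 2) ^ 2)
        - (∫ ω, ∑ j, (∑ i, a i ω * B j i) ^ 2) ^ 2 ≤ 3 * n := by
  have hL4 (i : Fin N) : MemLp (a i) 4 ℙ :=
    memLp_of_integrable_pow (by decide) (by norm_num) (hmeas i).aestronglyMeasurable (hint i)
  have hm4 (i : Fin N) : moment (a i) 4 ℙ ≤ 1 := hmom i
  have hm2 (i : Fin N) : moment (a i) 2 ℙ ≤ 1 := moment_two_le_one (hL4 i) (hm4 i)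
  have hZ (ω : Ω) : ∑ j, (∑ i, a i ω * B j i) ^ 2 = ∑ i, ∑ k, a i ω * a k ω * (Bᵀ * B) i k := by
    simpa only [mulVec, dotProduct, mul_comm] using B.sum_sq_mulVec_eq (fun i ↦ a i ω)
  simp_rw [hZ]
  rw [hindep.integral_quadraticForm_sq_sub_sq hmeas hmean hL4 (c := Bᵀ * B)
      fun i k ↦ by simp [mul_apply, mul_comm],
    hindep.integral_quadraticForm hmeas hmean (fun i ↦ (hL4 i).mono_exponent (by norm_num))
      (Bᵀ * B)]
  constructor
  · simpa using B.sum_mul_diag_transpose_mul_self_le hB hm2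
  · simpa using B.two_mul_sum_mul_sq_add_sum_mul_sq_diag_le hB (fun i ↦ moment_two_nonneg _ _) hm2
      fun i ↦ by linarith [hm4 i, sq_nonneg (moment (a i) 2 ℙ)]
end

section
/- Let a_{ij} (i = 1,…,N; j = 1,…,n) be independent random variables with E[a_{ij}²] ≤ p and |a_{ij}| ≤ 1, where p ∈ (0,1]. Then E max_{1 ≤ i ≤ N} Σ_{j=1}^n a_{ij}² ≤ C(np + log(2N)) for an absolute constant C. -/
/-!
Put `S i = ∑ⱼ a i j ^ 2`. Since each `a i j ^ 2` lies in `[0, 1]`, convexity of `exp` gives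
`E exp (a i j ^ 2) ≤ 1 + (e - 1) p ≤ exp ((e - 1) p)`, so by independence
`E exp (S i) ≤ exp ((e - 1) n p)`. Bounding the maximum by the log-sum-exp and moving the
expectation inside the logarithm yields `E maxᵢ S i ≤ log (N exp ((e - 1) n p))
= log N + (e - 1) n p`.
-/

open MeasureTheory ProbabilityTheory Real Set

lemma Real.exp_mul_le_one_add_mul_of_mem_Icc (t : ℝ) {x : ℝ} (hx : x ∈ Icc (0 : ℝ) 1) :
    exp (t * x) ≤ 1 + (exp t - 1) * x := by
  have h := convexOn_exp.2 (mem_univ 0) (mem_univ t) (sub_nonneg.2 hx.2) hx.1 (by ring)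
  simp only [smul_eq_mul, mul_zero, zero_add, exp_zero, mul_one] at h
  rw [mul_comm]
  linarith

section

variable {Ω : Type*} [MeasurableSpace Ω] {μ : Measure Ω}

lemma ProbabilityTheory.mgf_le_exp_mul_integral_of_mem_Icc [IsProbabilityMeasure μ]
    {X : Ω → ℝ} (hX : AEMeasurable X μ) (h01 : ∀ᵐ ω ∂μ, X ω ∈ Icc (0 : ℝ) 1)
    (t : ℝ) :
    mgf X μ t ≤ exp ((exp t - 1) * μ[X]) := by
  have hint : Integrable X μ := .of_mem_Icc 0 1 hX h01
  calc mgf X μ t = ∫ ω, exp (t * X ω) ∂μ := rfl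
    _ ≤ ∫ ω, 1 + (exp t - 1) * X ω ∂μ :=
        integral_mono_of_nonneg (.of_forall fun _ => (exp_pos _).le)
          ((integrable_const 1).add (hint.const_mul _))
          (h01.mono fun _ hω => exp_mul_le_one_add_mul_of_mem_Icc t hω)
    _ = 1 + (exp t - 1) * μ[X] := by
        rw [integral_add (integrable_const 1) (hint.const_mul _), integral_const_mul]
        simp
    _ ≤ exp ((exp t - 1) * μ[X]) := by linarith [add_one_le_exp ((exp t - 1) * μ[X])]

lemma ProbabilityTheory.iIndepFun.mgf_sum_le_of_mem_Icc {ι : Type*} {X : ι → Ω → ℝ}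
    (h_indep : iIndepFun X μ) (h_meas : ∀ i, Measurable (X i))
    (h01 : ∀ i, ∀ᵐ ω ∂μ, X i ω ∈ Icc (0 : ℝ) 1)
    (s : Finset ι) (t : ℝ) :
    mgf (∑ i ∈ s, X i) μ t ≤ exp ((exp t - 1) * ∑ i ∈ s, μ[X i]) := by
  have := h_indep.isProbabilityMeasure
  rw [h_indep.mgf_sum h_meas, Finset.mul_sum, exp_sum]
  exact Finset.prod_le_prod (fun _ _ => mgf_nonneg) fun i _ =>
    mgf_le_exp_mul_integral_of_mem_Icc (h_meas i).aemeasurable (h01 i) t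

lemma ProbabilityTheory.iIndepFun.integral_exp_sum_sq_le {ι : Type*} [Fintype ι]
    {X : ι → Ω → ℝ} (h_indep : iIndepFun X μ) (h_meas : ∀ i, Measurable (X i))
    (hbdd : ∀ i, ∀ᵐ ω ∂μ, |X i ω| ≤ 1) {p : ℝ}
    (hvar : ∀ i, ∫ ω, X i ω ^ 2 ∂μ ≤ p) :
    ∫ ω, exp (∑ i, X i ω ^ 2) ∂μ ≤ exp ((exp 1 - 1) * (Fintype.card ι * p)) := by
  have h := (h_indep.comp (fun _ x => x ^ 2) fun _ => by fun_prop).mgf_sum_le_of_mem_Icc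
    (fun i => by fun_prop)
    (fun i => (hbdd i).mono fun ω hω => ⟨sq_nonneg _, (sq_le_one_iff_abs_le_one _).2 hω⟩)
    Finset.univ 1
  simp only [mgf, one_mul, Finset.sum_apply, Function.comp_def] at h
  refine h.trans (exp_le_exp.2 (mul_le_mul_of_nonneg_left ?_ ?_))
  · simpa using Finset.sum_le_sum fun i (_ : i ∈ Finset.univ) => hvar i
  · linarith [add_one_le_exp 1]

lemma integrable_iSup_of_fintype {ι : Type*} [Fintype ι] [Nonempty ι] {f : ι → Ω → ℝ}
    (hf : ∀ i, Integrable (f i) μ) : Integrable (fun ω => ⨆ i, f i ω) μ := by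
  have h : (fun ω => ⨆ i, f i ω) = Finset.univ.sup' Finset.univ_nonempty f := by
    ext ω
    rw [Finset.sup'_apply, Finset.sup'_univ_eq_ciSup]
  rw [h]
  exact Finset.sup'_induction _ _ (p := (Integrable · μ)) (fun _ hf _ hg => hf.sup hg)
    fun i _ => hf i

lemma integral_iSup_le_log_sum_integral_exp [IsProbabilityMeasure μ] {ι : Type*} [Fintype ι]
    [Nonempty ι] {S : ι → Ω → ℝ} (hS : ∀ i, Integrable (S i) μ)
    (hexp : ∀ i, Integrable (fun ω => exp (S i ω)) μ) :
    ∫ ω, ⨆ i, S i ω ∂μ ≤ log (∑ i, ∫ ω, exp (S i ω) ∂μ) := by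
  set c := ∑ i, ∫ ω, exp (S i ω) ∂μ
  have hc : 0 < c := Finset.sum_pos (fun i _ => integral_exp_pos (hexp i)) Finset.univ_nonempty
  have hsum : Integrable (fun ω => ∑ i, exp (S i ω)) μ :=
    integrable_finsetSum _ fun i _ => hexp i
  -- The tangent line of `log` at `c` replaces Jensen's inequality.
  have hpointwise : ∀ ω, ⨆ i, S i ω ≤ log c - 1 + (∑ i, exp (S i ω)) / c := by
    intro ω
    have hpos : 0 < ∑ i, exp (S i ω) :=
      Finset.sum_pos (fun i _ => exp_pos _) Finset.univ_nonempty
    have hlse : ⨆ i, S i ω ≤ log (∑ i, exp (S i ω)) := ciSup_le fun i => by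
      rw [← log_exp (S i ω)]
      exact log_le_log (exp_pos _) (Finset.single_le_sum (fun i _ => (exp_pos (S i ω)).le)
        (Finset.mem_univ i))
    have htangent := log_le_sub_one_of_pos (div_pos hpos hc)
    rw [log_div hpos.ne' hc.ne'] at htangent
    linarith
  calc ∫ ω, ⨆ i, S i ω ∂μ ≤ ∫ ω, log c - 1 + (∑ i, exp (S i ω)) / c ∂μ :=
        integral_mono (integrable_iSup_of_fintype hS)
          ((integrable_const _).add (hsum.div_const c)) hpointwise
    _ = log c := by
        rw [integral_add (integrable_const _) (hsum.div_const c), integral_div,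
          integral_finsetSum _ fun i _ => hexp i, div_self hc.ne']
        simp

lemma integral_iSup_le_log_card_add [IsProbabilityMeasure μ] {ι : Type*} [Fintype ι]
    [Nonempty ι] {S : ι → Ω → ℝ} (hS : ∀ i, Integrable (S i) μ)
    (hexp : ∀ i, Integrable (fun ω => exp (S i ω)) μ) {K : ℝ}
    (hK : ∀ i, ∫ ω, exp (S i ω) ∂μ ≤ exp K) :
    ∫ ω, ⨆ i, S i ω ∂μ ≤ log (Fintype.card ι) + K := calc
  ∫ ω, ⨆ i, S i ω ∂μ ≤ log (∑ i, ∫ ω, exp (S i ω) ∂μ) :=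
    integral_iSup_le_log_sum_integral_exp hS hexp
  _ ≤ log (Fintype.card ι * exp K) :=
    log_le_log (Finset.sum_pos (fun i _ => integral_exp_pos (hexp i)) Finset.univ_nonempty)
      (by simpa using Finset.sum_le_sum fun i (_ : i ∈ Finset.univ) => hK i)
  _ = log (Fintype.card ι) + K := by
    rw [log_mul (by positivity) (exp_pos _).ne', log_exp]

end

/-- There is an absolute constant `C` such that: for independent random variables `a_{ij}`
with `E a_{ij}² ≤ p` and `|a_{ij}| ≤ 1` (where `p ∈ (0,1]`),
`E max_i Σ_j a_{ij}² ≤ C (np + log(2N))`. -/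
theorem exp_max_row_sums :
    ∃ C : ℝ, 0 < C ∧
      ∀ (Ω : Type) (_ : MeasureSpace Ω), IsProbabilityMeasure (ℙ : Measure Ω) →
      ∀ (N n : ℕ) (p : ℝ), 0 < p → p ≤ 1 →
      ∀ (a : Fin N → Fin n → Ω → ℝ),
      (∀ i j, Measurable (a i j)) →
      iIndepFun (fun q : Fin N × Fin n => a q.1 q.2) ℙ →
      (∀ i j, (∫ ω, (a i j ω) ^ 2) ≤ p) →
      (∀ i j ω, |a i j ω| ≤ 1) →
        (∫ ω, ⨆ i : Fin N, ∑ j : Fin n, (a i j ω) ^ 2)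
          ≤ C * (n * p + Real.log (2 * N)) := by
  refine ⟨2, two_pos, fun Ω _ _ N n p hp _ a hmeas hindep hvar hbdd => ?_⟩
  rcases N.eq_zero_or_pos with rfl | hN
  · simp only [Real.iSup_of_isEmpty, integral_zero, CharP.cast_eq_zero, mul_zero, log_zero]
    positivity
  have : Nonempty (Fin N) := Fin.pos_iff_nonempty.1 hN
  have hrow_mem : ∀ i ω, ∑ j, a i j ω ^ 2 ∈ Icc (0 : ℝ) n := fun i ω =>
    ⟨by positivity, by simpa using Finset.sum_le_sum fun j (_ : j ∈ Finset.univ) =>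
      (sq_le_one_iff_abs_le_one _).2 (hbdd i j ω)⟩
  have hrow_meas : ∀ i, Measurable fun ω => ∑ j, a i j ω ^ 2 := by fun_prop
  have hexp_int : ∀ i, Integrable (fun ω => exp (∑ j, a i j ω ^ 2)) := fun i =>
    .of_mem_Icc 0 (exp n) (hrow_meas i).exp.aemeasurable
      (.of_forall fun ω => ⟨(exp_pos _).le, exp_le_exp.2 (hrow_mem i ω).2⟩)
  have hrow_mgf : ∀ i, ∫ ω, exp (∑ j, a i j ω ^ 2) ≤ exp ((exp 1 - 1) * (n * p)) := by
    intro i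
    simpa using (hindep.precomp (Prod.mk_right_injective i)).integral_exp_sum_sq_le
      (hmeas i) (fun j => .of_forall (hbdd i j)) (hvar i)
  calc ∫ ω, ⨆ i, ∑ j, a i j ω ^ 2
      ≤ log N + (exp 1 - 1) * (n * p) := by
        simpa using integral_iSup_le_log_card_add
          (fun i => .of_mem_Icc 0 n (hrow_meas i).aemeasurable (.of_forall (hrow_mem i)))
          hexp_int hrow_mgf
    _ ≤ 2 * (n * p + log (2 * N)) := by
        have hlog : log N ≤ log (2 * N) := log_le_log (by positivity) (by linarith)
        have he : exp 1 - 1 ≤ 2 := by linarith [exp_one_lt_d9]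
        nlinarith [log_nonneg (by exact_mod_cast hN : (1 : ℝ) ≤ N),
          mul_nonneg (sub_nonneg.2 he) (by positivity : (0 : ℝ) ≤ n * p)]
end

section
/- Let a_{ij} be independent random variables with E[a_{ij}²] ≤ p ∈ (0,1] and |a_{ij}| ≤ 1, and let B be an n × N matrix with ‖B‖ ≤ 1 and columns B₁,…,B_N. Then E max_{1 ≤ j ≤ n} Σ_{i=1}^N a_{ij}² ‖Bᵢ‖₂² ≤ C(np + log(2n)) for an absolute constant C. -/
open MeasureTheory ProbabilityTheory

/-!
With `wᵢ = ‖Bᵢ‖₂²`, the contraction `B` has `wᵢ ≤ 1` (columns) and `∑ wᵢ ≤ n` (rows). For a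
`[0,1]`-valued `Y`, convexity of `exp` gives `E e^{sY} ≤ exp (E Y (e^s - 1))`, so by independence
the column sum `Xⱼ = ∑ᵢ aᵢⱼ² wᵢ` has `E e^{Xⱼ} ≤ exp (2p ∑ wᵢ) ≤ e^{2pn}`. Integrating the pointwise
bound `maxⱼ Xⱼ ≤ t + e^{-t} ∑ⱼ e^{Xⱼ}` at `t = 2p ∑ wᵢ + log n` gives `E maxⱼ Xⱼ ≤ t + 1`.
-/

open Real

section OpNorm

open scoped Matrix Matrix.Norms.L2Operator

variable {m n : ℕ}

lemma opNorm_eq_l2_opNorm (M : Matrix (Fin m) (Fin n) ℝ) : opNorm M = ‖M‖ := rfl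

lemma opNorm_transpose (M : Matrix (Fin m) (Fin n) ℝ) : opNorm Mᵀ = opNorm M := by
  simpa [opNorm_eq_l2_opNorm] using M.l2_opNorm_conjTranspose

lemma sum_sq_col_le_opNorm_sq (M : Matrix (Fin m) (Fin n) ℝ) (i : Fin n) :
    ∑ k, M k i ^ 2 ≤ opNorm M ^ 2 := by
  have hle := M.l2_opNorm_mulVec (EuclideanSpace.single i 1)
  rw [← opNorm_eq_l2_opNorm, PiLp.norm_single, norm_one, mul_one] at hle
  have hnorm : ‖(EuclideanSpace.equiv (Fin m) ℝ).symm (M *ᵥ EuclideanSpace.single i 1)‖ ^ 2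
      = ∑ k, M k i ^ 2 := by
    simp [EuclideanSpace.norm_sq_eq, Matrix.mulVec_single]
  rw [← hnorm]
  gcongr

lemma sum_sq_row_le_opNorm_sq (M : Matrix (Fin m) (Fin n) ℝ) (k : Fin m) :
    ∑ i, M k i ^ 2 ≤ opNorm M ^ 2 := by
  simpa [opNorm_transpose] using sum_sq_col_le_opNorm_sq Mᵀ k

lemma sum_sum_sq_le_opNorm_sq (M : Matrix (Fin m) (Fin n) ℝ) :
    ∑ i, ∑ k, M k i ^ 2 ≤ m * opNorm M ^ 2 := by
  rw [Finset.sum_comm]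
  simpa using Finset.sum_le_sum fun k (_ : k ∈ Finset.univ) => sum_sq_row_le_opNorm_sq M k

end OpNorm

lemma Real.exp_mul_le_one_add_mul {x c : ℝ} (hx₀ : 0 ≤ x) (hx₁ : x ≤ 1) :
    exp (x * c) ≤ 1 + x * (exp c - 1) := by
  have h := convexOn_exp.2 (Set.mem_univ c) (Set.mem_univ 0) hx₀ (sub_nonneg.2 hx₁)
    (add_sub_cancel x 1)
  simp only [smul_eq_mul, mul_zero, add_zero, exp_zero, mul_one] at h
  linarith

lemma Real.exp_sub_one_le_two_mul {x : ℝ} (hx₀ : 0 ≤ x) (hx₁ : x ≤ 1) : exp x - 1 ≤ 2 * x := by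
  have h := exp_mul_le_one_add_mul (c := 1) hx₀ hx₁
  rw [mul_one] at h
  nlinarith [exp_one_lt_d9]

section Moments

variable {Ω : Type*} [MeasurableSpace Ω] {μ : Measure Ω} [IsProbabilityMeasure μ]

lemma mgf_le_exp_integral_mul_of_mem_Icc {Y : Ω → ℝ} (hY : AEMeasurable Y μ)
    (hb : ∀ᵐ ω ∂μ, Y ω ∈ Set.Icc 0 1) (t : ℝ) :
    mgf Y μ t ≤ exp (μ[Y] * (exp t - 1)) := by
  have hint : Integrable Y μ := Integrable.of_mem_Icc 0 1 hY hb
  calc mgf Y μ t = ∫ ω, exp (Y ω * t) ∂μ := by simp only [mgf, mul_comm]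
    _ ≤ ∫ ω, (1 + Y ω * (exp t - 1)) ∂μ := by
        refine integral_mono_ae ?_ ((integrable_const 1).add (hint.mul_const _)) ?_
        · simpa only [mul_comm] using integrable_exp_mul_of_mem_Icc (t := t) hY hb
        · filter_upwards [hb] with ω hω using exp_mul_le_one_add_mul hω.1 hω.2
    _ = 1 + μ[Y] * (exp t - 1) := by
        rw [integral_add (integrable_const 1) (hint.mul_const _), integral_mul_const]
        simp
    _ ≤ exp (μ[Y] * (exp t - 1)) := by linarith [add_one_le_exp (μ[Y] * (exp t - 1))]

lemma mgf_sum_mul_le_exp {ι : Type*} [Fintype ι] {Y : ι → Ω → ℝ} {w : ι → ℝ} {p : ℝ}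
    (hmeas : ∀ i, Measurable (Y i)) (hindep : iIndepFun Y μ)
    (hb : ∀ i ω, Y i ω ∈ Set.Icc 0 1) (hmean : ∀ i, μ[Y i] ≤ p)
    (hw₀ : ∀ i, 0 ≤ w i) (hw₁ : ∀ i, w i ≤ 1) :
    mgf (fun ω => ∑ i, Y i ω * w i) μ 1 ≤ exp (2 * p * ∑ i, w i) := by
  have hindep_mul : iIndepFun (fun i ω => w i * Y i ω) μ :=
    hindep.comp (fun i y => w i * y) fun i => measurable_const_mul (w i)
  have hsum : (fun ω => ∑ i, Y i ω * w i) = ∑ i, fun ω => w i * Y i ω := by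
    ext ω; simp [mul_comm]
  have hfactor (i : ι) : mgf (fun ω => w i * Y i ω) μ 1 ≤ exp (2 * p * w i) := by
    have hY₀ : 0 ≤ μ[Y i] := integral_nonneg fun ω => (hb i ω).1
    calc mgf (fun ω => w i * Y i ω) μ 1 = mgf (Y i) μ (w i) := by rw [mgf_const_mul, mul_one]
      _ ≤ exp (μ[Y i] * (exp (w i) - 1)) :=
          mgf_le_exp_integral_mul_of_mem_Icc (hmeas i).aemeasurable (ae_of_all _ (hb i)) _
      _ ≤ exp (2 * p * w i) := by
          gcongr exp ?_
          nlinarith [exp_sub_one_le_two_mul (hw₀ i) (hw₁ i), hmean i, hw₀ i]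
  rw [hsum, hindep_mul.mgf_sum (fun i => (hmeas i).const_mul _), Finset.mul_sum, exp_sum]
  exact Finset.prod_le_prod (fun i _ => mgf_nonneg) fun i _ => hfactor i

lemma integral_iSup_le_add_sum_mgf_div_exp {ι : Type*} [Fintype ι] {X : ι → Ω → ℝ}
    (hX₀ : ∀ j ω, 0 ≤ X j ω) (hint : ∀ j, Integrable (fun ω => exp (X j ω)) μ)
    {t : ℝ} (ht : 0 ≤ t) :
    ∫ ω, ⨆ j, X j ω ∂μ ≤ t + (∑ j, mgf (X j) μ 1) / exp t := by
  have hpointwise (ω : Ω) : ⨆ j, X j ω ≤ t + (∑ j, exp (X j ω)) / exp t := by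
    refine Real.iSup_le (fun j => ?_) (by positivity)
    calc X j ω ≤ t + exp (X j ω - t) := by linarith [add_one_le_exp (X j ω - t)]
      _ ≤ t + (∑ j, exp (X j ω)) / exp t := by
          rw [exp_sub]
          gcongr
          exact Finset.single_le_sum (f := fun j => exp (X j ω)) (fun j _ => (exp_pos _).le)
            (Finset.mem_univ j)
  have hint_sum : Integrable (fun ω => (∑ j, exp (X j ω)) / exp t) μ :=
    (integrable_finsetSum _ fun j _ => hint j).div_const _
  calc ∫ ω, ⨆ j, X j ω ∂μ ≤ ∫ ω, (t + (∑ j, exp (X j ω)) / exp t) ∂μ :=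
        integral_mono_of_nonneg (ae_of_all _ fun ω => Real.iSup_nonneg fun j => hX₀ j ω)
          ((integrable_const t).add hint_sum) (ae_of_all _ hpointwise)
    _ = t + (∑ j, mgf (X j) μ 1) / exp t := by
        rw [integral_add (integrable_const t) hint_sum, integral_div,
          integral_finsetSum _ fun j _ => hint j]
        simp [mgf]

lemma integral_iSup_sum_mul_le {ι κ : Type*} [Fintype ι] [Fintype κ] [Nonempty κ]
    {Y : ι → κ → Ω → ℝ} {w : ι → ℝ} {p : ℝ} (hp : 0 ≤ p)
    (hmeas : ∀ i j, Measurable (Y i j)) (hindep : ∀ j, iIndepFun (fun i => Y i j) μ)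
    (hb : ∀ i j ω, Y i j ω ∈ Set.Icc 0 1) (hmean : ∀ i j, μ[Y i j] ≤ p)
    (hw₀ : ∀ i, 0 ≤ w i) (hw₁ : ∀ i, w i ≤ 1) :
    ∫ ω, ⨆ j, ∑ i, Y i j ω * w i ∂μ ≤ 2 * p * ∑ i, w i + log (Fintype.card κ) + 1 := by
  have hX_mem (j : κ) (ω : Ω) : ∑ i, Y i j ω * w i ∈ Set.Icc 0 (∑ i, w i) :=
    ⟨Finset.sum_nonneg fun i _ => mul_nonneg (hb i j ω).1 (hw₀ i),
      Finset.sum_le_sum fun i _ => mul_le_of_le_one_left (hw₀ i) (hb i j ω).2⟩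
  have hW₀ : 0 ≤ ∑ i, w i := Finset.sum_nonneg fun i _ => hw₀ i
  have hcard : (1 : ℝ) ≤ Fintype.card κ := Nat.one_le_cast.2 Fintype.card_pos
  set t := 2 * p * ∑ i, w i + log (Fintype.card κ)
  have hexp_t : exp t = Fintype.card κ * exp (2 * p * ∑ i, w i) := by
    rw [exp_add, exp_log (by positivity), mul_comm]
  calc ∫ ω, ⨆ j, ∑ i, Y i j ω * w i ∂μ
      ≤ t + (∑ j, mgf (fun ω => ∑ i, Y i j ω * w i) μ 1) / exp t :=
        integral_iSup_le_add_sum_mgf_div_exp (fun j ω => (hX_mem j ω).1)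
          (fun j => by
            simpa using integrable_exp_mul_of_mem_Icc (t := 1)
              (Finset.measurable_sum _ fun i _ => (hmeas i j).mul_const _).aemeasurable
              (ae_of_all _ (hX_mem j)))
          (add_nonneg (by positivity) (log_nonneg hcard))
    _ ≤ t + Fintype.card κ * exp (2 * p * ∑ i, w i) / exp t := by
        gcongr
        simpa using Finset.sum_le_card_nsmul Finset.univ _ _ fun j _ =>
          mgf_sum_mul_le_exp (fun i => hmeas i j) (hindep j) (fun i => hb i j)
            (fun i => hmean i j) hw₀ hw₁
    _ = t + 1 := by rw [hexp_t, div_self (by positivity)]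

end Moments

/-- There is an absolute constant `C` such that: for independent random variables `a_{ij}`
with `E a_{ij}² ≤ p ∈ (0,1]` and `|a_{ij}| ≤ 1`, and any `n × N` matrix `B` with `‖B‖ ≤ 1`
and columns `Bᵢ`, one has `E max_j Σ_i a_{ij}² ‖Bᵢ‖₂² ≤ C (np + log(2n))`. -/
theorem exp_max_weighted_column_sums :
    ∃ C : ℝ, 0 < C ∧
      ∀ (Ω : Type) (_ : MeasureSpace Ω), IsProbabilityMeasure (ℙ : Measure Ω) →
      ∀ (N n : ℕ) (p : ℝ), 0 < p → p ≤ 1 →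
      ∀ (B : Matrix (Fin n) (Fin N) ℝ), opNorm B ≤ 1 →
      ∀ (a : Fin N → Fin n → Ω → ℝ),
      (∀ i j, Measurable (a i j)) →
      iIndepFun (fun q : Fin N × Fin n => a q.1 q.2) ℙ →
      (∀ i j, (∫ ω, (a i j ω) ^ 2) ≤ p) →
      (∀ i j ω, |a i j ω| ≤ 1) →
        (∫ ω, ⨆ j : Fin n, ∑ i : Fin N, (a i j ω) ^ 2 * ∑ k : Fin n, (B k i) ^ 2)
          ≤ C * (n * p + Real.log (2 * n)) := by
  refine ⟨3, by norm_num, fun Ω _ _ N n p hp _ B hB a hmeas hindep hmom habs => ?_⟩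
  rcases n.eq_zero_or_pos with rfl | hn
  · simp
  have : Nonempty (Fin n) := ⟨⟨0, hn⟩⟩
  have hB₁ : opNorm B ^ 2 ≤ 1 := pow_le_one₀ (norm_nonneg _) hB
  have hw_sum : ∑ i, ∑ k, B k i ^ 2 ≤ n :=
    (sum_sum_sq_le_opNorm_sq B).trans (mul_le_of_le_one_right n.cast_nonneg hB₁)
  have hindep_col (j : Fin n) : iIndepFun (fun i ω => a i j ω ^ 2) ℙ :=
    (hindep.precomp (Prod.mk_left_injective j)).comp (fun _ x => x ^ 2)
      fun _ => measurable_id.pow_const 2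
  calc (∫ ω, ⨆ j, ∑ i, a i j ω ^ 2 * ∑ k, B k i ^ 2)
      ≤ 2 * p * ∑ i, ∑ k, B k i ^ 2 + log n + 1 := by
        simpa using integral_iSup_sum_mul_le (Y := fun i j ω => a i j ω ^ 2) hp.le
          (fun i j => (hmeas i j).pow_const 2) hindep_col
          (fun i j ω => ⟨sq_nonneg _, (sq_le_one_iff_abs_le_one _).2 (habs i j ω)⟩) hmom
          (fun i => by positivity) fun i => (sum_sq_col_le_opNorm_sq B i).trans hB₁
    _ ≤ 2 * p * n + log n + 1 := by gcongr
    _ ≤ 3 * (n * p + log (2 * n)) := by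
        rw [log_mul two_ne_zero (by positivity)]
        nlinarith [log_two_gt_d9, log_nonneg (Nat.one_le_cast.2 hn)]
end
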